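/- If H is obtained from an arbitrary graph G by subdividing every edge exactly twice, then the set of original vertices of G forms a strong splitting stable set of H whose removal yields a graph in which every connected component has at most 2 vertices. -/
import Mathlib


/-- A stable (independent) set of vertices. -/
def SimpleGraph.IsStableSet {V : Type*} (G : SimpleGraph V) (A : Set V) : Prop :=
  ∀ ⦃u⦄, u ∈ A → ∀ ⦃v⦄, v ∈ A → ¬ G.Adj u v

/-- A splitting stable set: a stable set such that every vertex of `A` has at most one
neighbor in each connected component of `G \ A`. -/
def SimpleGraph.IsSplitting {V : Type*} (G : SimpleGraph V) (A : Set V) : Prop :=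
  G.IsStableSet A ∧ ∀ a ∈ A, ∀ u v : (Aᶜ : Set V),
    (G.induce (Aᶜ : Set V)).Reachable u v → G.Adj a ↑u → G.Adj a ↑v → u = v

/-- A strongly splitting stable set: additionally every vertex outside `S` has at most
one neighbor in `S`. -/
def SimpleGraph.IsStrongSplitting {V : Type*} (G : SimpleGraph V) (S : Set V) : Prop :=
  G.IsSplitting S ∧ ∀ v ∉ S, ∀ a ∈ S, ∀ b ∈ S, G.Adj v a → G.Adj v b → a = b

/-- A graph is Zykov-like if every nonempty induced subgraph contains a nonempty
splitting stable set. -/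
def SimpleGraph.ZykovLike {V : Type*} (G : SimpleGraph V) : Prop :=
  ∀ X : Set V, X.Nonempty → ∃ A : Set X, A.Nonempty ∧ (G.induce X).IsSplitting A

/-- A graph is Descartes-like if every nonempty induced subgraph contains a nonempty
strongly splitting stable set. -/
def SimpleGraph.DescartesLike {V : Type*} (G : SimpleGraph V) : Prop :=
  ∀ X : Set V, X.Nonempty → ∃ S : Set X, S.Nonempty ∧ (G.induce X).IsStrongSplitting S

/-- The graph obtained from G by subdividing every edge exactly twice: each edge uv is
replaced by a path u - x - y - v, the two internal vertices being modeled by the two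
darts (u,v) and (v,u) of the edge. -/
def twiceSubdivision {V : Type*} (G : SimpleGraph V) : SimpleGraph (V ⊕ G.Dart) :=
  SimpleGraph.fromRel (fun a b =>
    match a, b with
    | Sum.inl v, Sum.inr d => d.toProd.1 = v
    | Sum.inr d, Sum.inr d' => d' = d.symm
    | _, _ => False)

lemma twiceSub_adj {V : Type*} (G : SimpleGraph V) {a b : V ⊕ G.Dart} :
    (twiceSubdivision G).Adj a b ↔ a ≠ b ∧
      ((match a, b with
        | Sum.inl v, Sum.inr d => d.toProd.1 = v
        | Sum.inr d, Sum.inr d' => d' = d.symm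
        | _, _ => False) ∨
       (match b, a with
        | Sum.inl v, Sum.inr d => d.toProd.1 = v
        | Sum.inr d, Sum.inr d' => d' = d.symm
        | _, _ => False)) := by
  rw [twiceSubdivision, SimpleGraph.fromRel_adj]

/-- Relation capturing "equal or symmetric darts" on the non-original vertices. -/
def symmRel {V : Type*} (G : SimpleGraph V)
    (u v : ((Set.range (Sum.inl : V → V ⊕ G.Dart))ᶜ : Set (V ⊕ G.Dart))) : Prop :=
  (u : V ⊕ G.Dart) = v ∨
    ∃ d : G.Dart, (u : V ⊕ G.Dart) = Sum.inr d ∧ (v : V ⊕ G.Dart) = Sum.inr d.symm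

lemma not_inl {V : Type*} {G : SimpleGraph V}
    (u : ((Set.range (Sum.inl : V → V ⊕ G.Dart))ᶜ : Set (V ⊕ G.Dart))) :
    ∃ d : G.Dart, (u : V ⊕ G.Dart) = Sum.inr d := by
  obtain ⟨val, prop⟩ := u
  cases val with
  | inl v => exact absurd ⟨v, rfl⟩ prop
  | inr d => exact ⟨d, rfl⟩

lemma reachable_symmRel {V : Type*} (G : SimpleGraph V)
    (u v : ((Set.range (Sum.inl : V → V ⊕ G.Dart))ᶜ : Set (V ⊕ G.Dart)))
    (h : ((twiceSubdivision G).induce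
      ((Set.range (Sum.inl : V → V ⊕ G.Dart))ᶜ : Set (V ⊕ G.Dart))).Reachable u v) :
    symmRel G u v := by
  obtain ⟨w⟩ := h
  induction w with
  | nil => exact Or.inl rfl
  | @cons a b c hab p ih =>
    obtain ⟨d, hd⟩ := not_inl a
    obtain ⟨e, he⟩ := not_inl b
    have hadj : (twiceSubdivision G).Adj (a : V ⊕ G.Dart) b := hab
    rw [twiceSub_adj] at hadj
    have hbe : e = d.symm := by
      rcases hadj.2 with h1 | h1 <;> rw [hd, he] at h1
      · simpa using h1
      · have h2 : d = e.symm := by simpa using h1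
        rw [h2]; simp
    -- now a = inr d, b = inr d.symm
    rcases ih with h2 | ⟨f, hf1, hf2⟩
    · exact Or.inr ⟨d, hd, by rw [← h2, he, hbe]⟩
    · rw [he, hbe] at hf1
      have h3 : d.symm = f := by simpa using hf1
      subst h3
      left; rw [hd, hf2]; simp

/-- after subdividing every edge of G exactly twice, the set of original
vertices is a strong splitting stable set whose removal yields a graph in which every
connected component has at most 2 vertices. -/
theorem twiceSubdivision_strongSplitting {V : Type*} (G : SimpleGraph V) :
    (twiceSubdivision G).IsStrongSplitting (Set.range Sum.inl) ∧
      ∀ x y z : ((Set.range (Sum.inl : V → V ⊕ G.Dart))ᶜ : Set (V ⊕ G.Dart)),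
        ((twiceSubdivision G).induce
          ((Set.range (Sum.inl : V → V ⊕ G.Dart))ᶜ : Set (V ⊕ G.Dart))).Reachable x y →
        ((twiceSubdivision G).induce
          ((Set.range (Sum.inl : V → V ⊕ G.Dart))ᶜ : Set (V ⊕ G.Dart))).Reachable x z →
        (x = y ∨ x = z ∨ y = z) := by
  constructor
  · refine ⟨⟨?_, ?_⟩, ?_⟩
    · rintro u ⟨a, rfl⟩ v ⟨b, rfl⟩ hadj
      rw [twiceSub_adj] at hadj
      rcases hadj.2 with h | h <;> exact h
    · rintro a ⟨va, rfl⟩ u v hreach hu hv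
      obtain ⟨d, hd⟩ := not_inl u
      obtain ⟨e, he⟩ := not_inl v
      rw [twiceSub_adj] at hu hv
      have hd1 : d.toProd.1 = va := by
        rcases hu.2 with h | h <;> rw [hd] at h <;> simp_all
      have he1 : e.toProd.1 = va := by
        rcases hv.2 with h | h <;> rw [he] at h <;> simp_all
      rcases reachable_symmRel G u v hreach with h | ⟨f, hf1, hf2⟩
      · exact Subtype.ext h
      · rw [hd] at hf1; rw [he] at hf2
        have hfd : d = f := by simpa using hf1
        subst hfd
        have hed : e = d.symm := by simpa using hf2
        exfalso
        rw [hed] at he1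
        have : d.toProd.2 = va := he1
        exact d.adj.ne (hd1 ▸ this ▸ rfl)
    · intro v hv a ha b hb hva hvb
      obtain ⟨x, hx⟩ : ∃ d : G.Dart, v = Sum.inr d := by
        cases v with
        | inl w => exact absurd ⟨w, rfl⟩ hv
        | inr d => exact ⟨d, rfl⟩
      obtain ⟨va, rfl⟩ := ha
      obtain ⟨vb, rfl⟩ := hb
      subst hx
      rw [twiceSub_adj] at hva hvb
      have h1 : x.toProd.1 = va := by rcases hva.2 with h | h <;> simp_all
      have h2 : x.toProd.1 = vb := by rcases hvb.2 with h | h <;> simp_all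
      rw [← h1, ← h2]
  · intro x y z hxy hxz
    rcases reachable_symmRel G x y hxy with h | ⟨d, hd1, hd2⟩
    · exact Or.inl (Subtype.ext h)
    · rcases reachable_symmRel G x z hxz with h | ⟨e, he1, he2⟩
      · exact Or.inr (Or.inl (Subtype.ext h))
      · refine Or.inr (Or.inr (Subtype.ext ?_))
        rw [hd1] at he1
        have : d = e := by simpa using he1
        have := this.symm
        subst this
        rw [hd2, he2]
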